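/- Let K be a field and n ≥ 1. Call a nonzero polynomial f ∈ MvPolynomial (Fin n) K factor closed with respect to a monomial order ≺ if for any two monomials m, m' in the support of f with m' ≺ m, the monomial m' divides m. If G is the reduced Gröbner basis of an ideal I with respect to some monomial order ≺ and every element of G is factor closed with respect to ≺, then G is the reduced Gröbner basis of I with respect to every monomial order; that is, G is the unique reduced Gröbner basis of I. -/

import Mathlib

open MvPolynomial

/-- The leading monomial of `f` with respect to the monomial order `m`:
the `m`-largest monomial in the support of `f` (equal to `0` if `f = 0`). -/
noncomputable def leadMon {n : ℕ} {K : Type*} [CommSemiring K]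
    (m : MonomialOrder (Fin n)) (f : MvPolynomial (Fin n) K) : Fin n →₀ ℕ :=
  m.toSyn.symm (f.support.sup fun d => m.toSyn d)

/-- The leading coefficient of `f` with respect to the monomial order `m`. -/
noncomputable def leadCoeff {n : ℕ} {K : Type*} [CommSemiring K]
    (m : MonomialOrder (Fin n)) (f : MvPolynomial (Fin n) K) : K :=
  f.coeff (leadMon m f)

/-- `G` is a Gröbner basis of the ideal `I` with respect to the monomial order `m`:
`G` is a finite set of nonzero elements of `I` such that the leading monomial of every
nonzero element of `I` is divisible by the leading monomial of some `g ∈ G`.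
(Divisibility of monomials is the pointwise order `≤` on exponent vectors.) -/
def IsGroebnerBasis {n : ℕ} {K : Type*} [Field K] (m : MonomialOrder (Fin n))
    (I : Ideal (MvPolynomial (Fin n) K)) (G : Finset (MvPolynomial (Fin n) K)) : Prop :=
  (∀ g ∈ G, g ≠ 0) ∧ ((G : Set (MvPolynomial (Fin n) K)) ⊆ I) ∧
    ∀ f ∈ I, f ≠ 0 → ∃ g ∈ G, leadMon m g ≤ leadMon m f

/-- `G` is the reduced Gröbner basis of `I` with respect to `m`: it is a Gröbner basis,
every element has leading coefficient `1`, and no monomial in the support of any `g ∈ G`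
is divisible by the leading monomial of another element of `G`. -/
def IsReducedGroebnerBasis {n : ℕ} {K : Type*} [Field K] (m : MonomialOrder (Fin n))
    (I : Ideal (MvPolynomial (Fin n) K)) (G : Finset (MvPolynomial (Fin n) K)) : Prop :=
  IsGroebnerBasis m I G ∧ (∀ g ∈ G, leadCoeff m g = 1) ∧
    ∀ g ∈ G, ∀ g' ∈ G, g' ≠ g → ∀ d ∈ g.support, ¬ leadMon m g' ≤ d

/-- The number of distinct reduced Gröbner bases of `I`, i.e. the cardinality of the set
of all `G` that are the reduced Gröbner basis of `I` with respect to some monomial order. -/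
noncomputable def numReducedGB {n : ℕ} {K : Type*} [Field K]
    (I : Ideal (MvPolynomial (Fin n) K)) : ℕ :=
  Set.ncard {G : Finset (MvPolynomial (Fin n) K) |
    ∃ m : MonomialOrder.{0,0} (Fin n), IsReducedGroebnerBasis m I G}


/-- `f` is factor closed with respect to `m`: any monomial of `f` that is `m`-smaller than
another monomial of `f` divides it (divisibility is pointwise `≤` on exponent vectors). -/
def FactorClosed {n : ℕ} {K : Type*} [Field K] (m : MonomialOrder (Fin n))
    (f : MvPolynomial (Fin n) K) : Prop :=
  ∀ d ∈ f.support, ∀ d' ∈ f.support, m.toSyn d' < m.toSyn d → d' ≤ d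

section Aux

open MonomialOrder

lemma leadMon_mem {n : ℕ} {K : Type*} [CommSemiring K] {m : MonomialOrder (Fin n)}
    {f : MvPolynomial (Fin n) K} (hf : f ≠ 0) : leadMon m f ∈ f.support := by
  obtain ⟨d, hd, hsup⟩ := Finset.exists_mem_eq_sup f.support
    (by simpa using hf) (fun d => m.toSyn d)
  rw [leadMon, hsup]
  simpa using hd

lemma le_leadMon {n : ℕ} {K : Type*} [CommSemiring K] {m : MonomialOrder (Fin n)}
    {f : MvPolynomial (Fin n) K} {d : Fin n →₀ ℕ}
    (hd : d ∈ f.support) : m.toSyn d ≤ m.toSyn (leadMon m f) := by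
  rw [leadMon, AddEquiv.apply_symm_apply]
  exact Finset.le_sup hd

variable {n : ℕ} {K : Type} [Field K]

lemma supp_le_leadMon {m₀ : MonomialOrder (Fin n)} {g : MvPolynomial (Fin n) K}
    (hFC : FactorClosed m₀ g) {d : Fin n →₀ ℕ} (hd : d ∈ g.support) :
    d ≤ leadMon m₀ g := by
  have hg0 : g ≠ 0 := by
    intro h; rw [h] at hd; simp at hd
  rcases eq_or_ne d (leadMon m₀ g) with h | h
  · exact h.le
  · exact hFC _ (leadMon_mem hg0) d hd
      (lt_of_le_of_ne (le_leadMon hd) (fun hc => h (m₀.toSyn.injective hc)))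

lemma leadMon_eq_of_fc {m₀ : MonomialOrder (Fin n)} {g : MvPolynomial (Fin n) K}
    (hg0 : g ≠ 0) (hFC : FactorClosed m₀ g) (m : MonomialOrder (Fin n)) :
    leadMon m g = leadMon m₀ g := by
  apply m.toSyn.injective
  apply le_antisymm
  · exact m.toSyn_monotone (supp_le_leadMon hFC (leadMon_mem hg0))
  · exact le_leadMon (leadMon_mem hg0)

/-- Key lemma: if `G` is a Gröbner basis w.r.t. `m₀` consisting of factor-closed
polynomials, then for any monomial order `m`, the `m`-maximal monomial of any nonzero
element of `I` is divisible by the `m₀`-leading monomial of some `g ∈ G`. -/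
lemma keyA {I : Ideal (MvPolynomial (Fin n) K)} {m₀ : MonomialOrder (Fin n)}
    {G : Finset (MvPolynomial (Fin n) K)}
    (hGB : IsGroebnerBasis m₀ I G) (hFC : ∀ g ∈ G, FactorClosed m₀ g)
    (m : MonomialOrder (Fin n)) :
    ∀ f ∈ I, ∀ d : Fin n →₀ ℕ, f.coeff d ≠ 0 →
      (∀ d' ∈ f.support, m.toSyn d' ≤ m.toSyn d) → ∃ g ∈ G, leadMon m₀ g ≤ d := by
  suffices main : ∀ s : m₀.syn, ∀ f, m₀.toSyn (leadMon m₀ f) = s → f ∈ I →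
      ∀ d, f.coeff d ≠ 0 → (∀ d' ∈ f.support, m.toSyn d' ≤ m.toSyn d) →
      ∃ g ∈ G, leadMon m₀ g ≤ d by
    intro f hfI d hd hdmax
    exact main _ f rfl hfI d hd hdmax
  intro s
  induction s using WellFoundedLT.induction with
  | _ s IH =>
  intro f hfs hfI d hd hdmax
  have hf0 : f ≠ 0 := fun h => hd (by simp [h])
  obtain ⟨g, hgG, hgle⟩ := hGB.2.2 f hfI hf0
  set L := leadMon m₀ f with hLdef
  set Lg := leadMon m₀ g with hLgdef
  have hg0 : g ≠ 0 := hGB.1 g hgG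
  have hgI : (g : MvPolynomial (Fin n) K) ∈ I := hGB.2.1 hgG
  have hLmem : L ∈ f.support := leadMon_mem hf0
  have hLgmem : Lg ∈ g.support := leadMon_mem hg0
  have hlcg : g.coeff Lg ≠ 0 := by simpa [MvPolynomial.mem_support_iff] using hLgmem
  set e := L - Lg with hedef
  have heL : e + Lg = L := tsub_add_cancel_of_le hgle
  set c := f.coeff L / g.coeff Lg with hcdef
  set p := (MvPolynomial.monomial e c : MvPolynomial (Fin n) K) * g with hpdef
  have hpcoeff : ∀ d₀, p.coeff d₀ =
      if e ≤ d₀ then c * g.coeff (d₀ - e) else 0 :=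
    fun d₀ => MvPolynomial.coeff_monomial_mul' d₀ e c g
  have hpmon : ∀ d₀, p.coeff d₀ ≠ 0 → d₀ ≤ L := by
    intro d₀ h0
    rw [hpcoeff] at h0
    split_ifs at h0 with hle
    · have hmem : d₀ - e ∈ g.support := by
        rw [MvPolynomial.mem_support_iff]
        intro hz; rw [hz, mul_zero] at h0; exact h0 rfl
      have h1 : d₀ - e ≤ Lg := supp_le_leadMon (hFC g hgG) hmem
      calc d₀ = e + (d₀ - e) := (add_tsub_cancel_of_le hle).symm
        _ ≤ e + Lg := add_le_add_right h1 e
        _ = L := heL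
    · exact absurd rfl h0
  have hpL : p.coeff L = f.coeff L := by
    rw [hpcoeff]
    rw [if_pos (by rw [← heL]; exact le_self_add)]
    have : L - e = Lg := tsub_tsub_cancel_of_le hgle
    rw [this, hcdef, div_mul_cancel₀ _ hlcg]
  set f' := f - p with hf'def
  have hf'I : f' ∈ I := I.sub_mem hfI (I.mul_mem_left _ hgI)
  have hf'L : f'.coeff L = 0 := by
    rw [hf'def, MvPolynomial.coeff_sub, hpL, sub_self]
  have hf'supp : ∀ d₀ ∈ f'.support,
      m₀.toSyn d₀ < m₀.toSyn L ∧ m.toSyn d₀ ≤ m.toSyn d := by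
    intro d₀ h₀
    have hne : d₀ ≠ L := by
      rintro rfl; exact (MvPolynomial.mem_support_iff.mp h₀) hf'L
    have hor : f.coeff d₀ ≠ 0 ∨ p.coeff d₀ ≠ 0 := by
      by_contra hc
      push_neg at hc
      apply MvPolynomial.mem_support_iff.mp h₀
      rw [hf'def, MvPolynomial.coeff_sub, hc.1, hc.2, sub_self]
    rcases hor with h | h
    · have hmem : d₀ ∈ f.support := MvPolynomial.mem_support_iff.mpr h
      refine ⟨lt_of_le_of_ne (le_leadMon hmem)
        (fun hc => hne (m₀.toSyn.injective hc)), hdmax d₀ hmem⟩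
    · have hle : d₀ ≤ L := hpmon d₀ h
      refine ⟨lt_of_le_of_ne (m₀.toSyn_monotone hle)
        (fun hc => hne (m₀.toSyn.injective hc)), ?_⟩
      exact le_trans (m.toSyn_monotone hle) (hdmax L hLmem)
  by_cases hd' : f'.coeff d = 0
  · have hpd : p.coeff d ≠ 0 := by
      intro h0
      apply hd
      have := hd'
      rw [hf'def, MvPolynomial.coeff_sub, h0, sub_zero] at this
      exact this
    have hdL : d ≤ L := hpmon d hpd
    have hdL' : d = L := m.toSyn.injective
      (le_antisymm (m.toSyn_monotone hdL) (hdmax L hLmem))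
    exact ⟨g, hgG, hdL' ▸ hgle⟩
  · have hf'0 : f' ≠ 0 := fun h => hd' (by simp [h])
    have hlt : m₀.toSyn (leadMon m₀ f') < s := by
      rw [← hfs]; exact (hf'supp _ (leadMon_mem hf'0)).1
    exact IH _ hlt f' rfl hf'I d hd' (fun d' h => (hf'supp d' h).2)

/-- Part 1: `G` is a reduced Gröbner basis with respect to every monomial order. -/
lemma part1 {I : Ideal (MvPolynomial (Fin n) K)} {m₀ : MonomialOrder (Fin n)}
    {G : Finset (MvPolynomial (Fin n) K)}
    (hG : IsReducedGroebnerBasis m₀ I G) (hFC : ∀ g ∈ G, FactorClosed m₀ g)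
    (m : MonomialOrder (Fin n)) : IsReducedGroebnerBasis m I G := by
  obtain ⟨⟨hne, hsub, hdiv⟩, hlc, hred⟩ := hG
  have hLeq : ∀ g ∈ G, leadMon m g = leadMon m₀ g := fun g hg =>
    leadMon_eq_of_fc (hne g hg) (hFC g hg) m
  refine ⟨⟨hne, hsub, ?_⟩, ?_, ?_⟩
  · intro f hf hf0
    obtain ⟨g, hgG, hgle⟩ := keyA ⟨hne, hsub, hdiv⟩ hFC m f hf (leadMon m f)
      (by simpa [MvPolynomial.mem_support_iff] using leadMon_mem hf0)
      (fun d' hd' => le_leadMon hd')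
    exact ⟨g, hgG, (hLeq g hgG) ▸ hgle⟩
  · intro g hg
    rw [leadCoeff, hLeq g hg]
    exact hlc g hg
  · intro g hg g' hg' hne' d hd
    rw [hLeq g' hg']
    exact hred g hg g' hg' hne' d hd

/-- Uniqueness: two reduced Gröbner bases of `I` w.r.t. the same order are equal. -/
lemma reducedGB_subset {I : Ideal (MvPolynomial (Fin n) K)} {m : MonomialOrder (Fin n)}
    {G₁ G₂ : Finset (MvPolynomial (Fin n) K)}
    (h₁ : IsReducedGroebnerBasis m I G₁) (h₂ : IsReducedGroebnerBasis m I G₂) :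
    G₁ ⊆ G₂ := by
  obtain ⟨⟨hne₁, hsub₁, hdiv₁⟩, hlc₁, hred₁⟩ := h₁
  obtain ⟨⟨hne₂, hsub₂, hdiv₂⟩, hlc₂, hred₂⟩ := h₂
  intro g₁ hg₁
  have hg₁0 : g₁ ≠ 0 := hne₁ g₁ hg₁
  -- find g₂ ∈ G₂ with the same leading monomial
  obtain ⟨g₂, hg₂, hle₂⟩ := hdiv₂ g₁ (hsub₁ hg₁) hg₁0
  obtain ⟨g₁', hg₁', hle₁⟩ := hdiv₁ g₂ (hsub₂ hg₂) (hne₂ g₂ hg₂)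
  have hg₁'eq : g₁' = g₁ := by
    by_contra hnee
    exact hred₁ g₁ hg₁ g₁' hg₁' hnee (leadMon m g₁) (leadMon_mem hg₁0)
      (le_trans hle₁ hle₂)
  rw [hg₁'eq] at hle₁
  have hLeq : leadMon m g₂ = leadMon m g₁ :=
    le_antisymm hle₂ (le_trans hle₁ (le_refl _))
  -- now show g₁ = g₂
  have hmain : g₁ = g₂ := by
    by_contra hne12
    set h := g₁ - g₂ with hhdef
    have hh0 : h ≠ 0 := sub_ne_zero_of_ne hne12
    have hhI : h ∈ I := I.sub_mem (hsub₁ hg₁) (hsub₂ hg₂)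
    have hhL : h.coeff (leadMon m g₁) = 0 := by
      rw [hhdef, MvPolynomial.coeff_sub]
      have e1 : g₁.coeff (leadMon m g₁) = 1 := hlc₁ g₁ hg₁
      have e2 : g₂.coeff (leadMon m g₁) = 1 := by
        rw [← hLeq]; exact hlc₂ g₂ hg₂
      rw [e1, e2, sub_self]
    set d₀ := leadMon m h with hd₀def
    have hd₀mem : d₀ ∈ h.support := leadMon_mem hh0
    have hd₀ne : d₀ ≠ leadMon m g₁ := by
      rintro hc
      exact (MvPolynomial.mem_support_iff.mp hd₀mem) (hc ▸ hhL)
    have hd₀or : d₀ ∈ g₁.support ∨ d₀ ∈ g₂.support := by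
      by_contra hc
      push_neg at hc
      apply MvPolynomial.mem_support_iff.mp hd₀mem
      rw [hhdef, MvPolynomial.coeff_sub,
        MvPolynomial.notMem_support_iff.mp hc.1,
        MvPolynomial.notMem_support_iff.mp hc.2, sub_self]
    obtain ⟨g, hgG, hgle⟩ := hdiv₁ h hhI hh0
    rcases hd₀or with hmem | hmem
    · rcases eq_or_ne g g₁ with hgeq | hgne
      · rw [hgeq] at hgle
        have h1 : m.toSyn (leadMon m g₁) ≤ m.toSyn d₀ := m.toSyn_monotone hgle
        have h2 : m.toSyn d₀ < m.toSyn (leadMon m g₁) :=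
          lt_of_le_of_ne (le_leadMon hmem)
            (fun hc => hd₀ne (m.toSyn.injective hc))
        exact absurd h1 (not_le_of_gt h2)
      · exact hred₁ g₁ hg₁ g hgG hgne d₀ hmem hgle
    · obtain ⟨g', hg'G, hg'le⟩ := hdiv₂ g (hsub₁ hgG) (hne₁ g hgG)
      have hg'd₀ : leadMon m g' ≤ d₀ := le_trans hg'le hgle
      rcases eq_or_ne g' g₂ with hgeq | hgne
      · rw [hgeq] at hg'd₀
        have h1 : m.toSyn (leadMon m g₂) ≤ m.toSyn d₀ := m.toSyn_monotone hg'd₀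
        have h2 : m.toSyn d₀ < m.toSyn (leadMon m g₂) :=
          lt_of_le_of_ne (le_leadMon hmem)
            (fun hc => hd₀ne ((m.toSyn.injective hc).trans hLeq))
        exact absurd h1 (not_le_of_gt h2)
      · exact hred₂ g₂ hg₂ g' hg'G hgne d₀ hmem hg'd₀
  exact hmain ▸ hg₂

end Aux

/-- If the reduced Gröbner basis `G` of `I` with respect to some monomial order consists of
factor-closed polynomials, then `G` is the reduced Gröbner basis of `I` with respect to
every monomial order; that is, `G` is the unique reduced Gröbner basis of `I`. -/
theorem factorClosed_reduced_GB_unique {n : ℕ} {K : Type} [Field K] (hn : 1 ≤ n)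
    (I : Ideal (MvPolynomial (Fin n) K)) (m₀ : MonomialOrder (Fin n))
    (G : Finset (MvPolynomial (Fin n) K))
    (hG : IsReducedGroebnerBasis m₀ I G) (hFC : ∀ g ∈ G, FactorClosed m₀ g) :
    (∀ m : MonomialOrder (Fin n), IsReducedGroebnerBasis m I G) ∧
    (∀ (m : MonomialOrder (Fin n)) (G' : Finset (MvPolynomial (Fin n) K)),
      IsReducedGroebnerBasis m I G' → G' = G) := by
  refine ⟨fun m => part1 hG hFC m, fun m G' hG' => ?_⟩
  exact Finset.Subset.antisymm (reducedGB_subset hG' (part1 hG hFC m))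
    (reducedGB_subset (part1 hG hFC m) hG')
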